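/- arXiv:1612.09194 — 4 statements merged into one kernel-verified Lean document; each statement's English description precedes it below -/
import Mathlib

section
/- For real numbers x, y with 0 < y < 1 and x = y, the integral I(y,y) := ∫₀^{arcosh(1/y)} dt/√(1 − y² cosh² t) equals the complete elliptic integral of the first kind K(√(1 − y²)) = ∫₀^{π/2} dθ/√(1 − (1−y²) sin² θ). -/
/-!
Substitute `tanh t = k sin θ` with `k = √(1 - y²)`, i.e. `t = artanh (k sin θ)`. Since
`cosh² t = 1 / (1 - k² sin² θ)`, the integrand becomes `√(1 - k² sin² θ) / (k cos θ)` and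
`dt = k cos θ dθ / (1 - k² sin² θ)`, so their product is the elliptic integrand. The substitution is
monotone and maps `[0, π/2]` onto `[0, artanh k] = [0, arcosh (1/y)]`; a monotone change of
variables needs no integrability hypothesis, which matters because the `t`-integrand blows up at
the upper endpoint.
-/

noncomputable def arcosh (x : ℝ) : ℝ := Real.log (x + Real.sqrt (x ^ 2 - 1))

open Real hiding arcosh
open Set MeasureTheory

lemma arcosh_eq_real_arcosh : arcosh = Real.arcosh := rfl

lemma arcosh_one_div_eq_artanh {y : ℝ} (hy0 : 0 < y) (hy1 : y ≤ 1) :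
    arcosh (1 / y) = artanh √(1 - y ^ 2) := by
  rw [arcosh_eq_real_arcosh, ← artanh_tanh (Real.arcosh _), tanh_arcosh (one_le_one_div hy0 hy1),
    show (1 / y) ^ 2 - 1 = (1 - y ^ 2) / y ^ 2 by field_simp, sqrt_div' _ (sq_nonneg y),
    sqrt_sq hy0.le]
  field_simp

lemma Real.hasDerivAt_artanh {x : ℝ} (hx : x ∈ Ioo (-1) 1) :
    HasDerivAt artanh (1 / (1 - x ^ 2)) x := by
  have h1 : 0 < 1 + x := by linarith [hx.1]
  have h2 : 0 < 1 - x := by linarith [hx.2]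
  have hlog : HasDerivAt (fun x => 1 / 2 * (log (1 + x) - log (1 - x)))
      (1 / 2 * (1 / (1 + x) - (-1) / (1 - x))) x := by
    have := (((hasDerivAt_id x).const_add 1).log h1.ne').sub
      (((hasDerivAt_id x).const_sub 1).log h2.ne')
    simpa using this.const_mul (1 / 2 : ℝ)
  refine (hlog.congr_deriv ?_).congr_of_eventuallyEq ?_
  · rw [show 1 - x ^ 2 = (1 + x) * (1 - x) by ring]
    field_simp
    ring
  filter_upwards [Ioo_mem_nhds hx.1 hx.2] with z hz
  rw [artanh_eq_half_log (Ioo_subset_Icc_self hz),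
    log_div (by linarith [hz.1]) (by linarith [hz.2])]

lemma hasDerivAt_artanh_mul_sin {k : ℝ} (hk : |k| < 1) (θ : ℝ) :
    HasDerivAt (fun θ => artanh (k * sin θ)) (k * cos θ / (1 - k ^ 2 * sin θ ^ 2)) θ := by
  have hmem : k * sin θ ∈ Ioo (-1) 1 := by
    rw [mem_Ioo, ← abs_lt, abs_mul]
    exact (mul_le_of_le_one_right (abs_nonneg k) (abs_sin_le_one θ)).trans_lt hk
  have h := (hasDerivAt_artanh hmem).comp θ ((hasDerivAt_sin θ).const_mul k)
  rwa [one_div_mul_eq_div, mul_pow] at h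

lemma one_sub_mul_cosh_artanh_sq {u : ℝ} (hu : u ∈ Ioo (-1) 1) (a : ℝ) :
    1 - a * cosh (artanh u) ^ 2 = (1 - u ^ 2 - a) / (1 - u ^ 2) := by
  have h : 0 < 1 - u ^ 2 := by nlinarith [hu.1, hu.2]
  rw [cosh_artanh hu, div_pow, sq_sqrt h.le]
  field_simp

lemma inv_sqrt_comp_artanh_mul_sin_mul_deriv {y k θ : ℝ} (hk0 : 0 < k) (hk : k ^ 2 = 1 - y ^ 2)
    (hθ : 0 < cos θ) :
    1 / √(1 - y ^ 2 * cosh (artanh (k * sin θ)) ^ 2) * (k * cos θ / (1 - k ^ 2 * sin θ ^ 2)) =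
      1 / √(1 - (1 - y ^ 2) * sin θ ^ 2) := by
  have hD : 0 < 1 - k ^ 2 * sin θ ^ 2 := by
    nlinarith [sin_sq_add_cos_sq θ, sq_nonneg (y * sin θ), sq_pos_of_pos hθ]
  have hmem : k * sin θ ∈ Ioo (-1) 1 := by
    rw [mem_Ioo, ← abs_lt, ← sq_lt_one_iff_abs_lt_one]
    linarith [mul_pow k (sin θ) 2]
  have hnum : 1 - k ^ 2 * sin θ ^ 2 - y ^ 2 = (k * cos θ) ^ 2 := by
    linear_combination -hk - k ^ 2 * sin_sq_add_cos_sq θ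
  rw [one_sub_mul_cosh_artanh_sq hmem, mul_pow, hnum, sqrt_div' _ hD.le, sqrt_sq (by positivity),
    ← hk]
  field_simp
  rw [sq_sqrt hD.le]

theorem integral_eq_completeEllipticK_of_eq (y : ℝ) (hy0 : 0 < y) (hy1 : y < 1) :
    (∫ t in (0:ℝ)..arcosh (1 / y), 1 / Real.sqrt (1 - y ^ 2 * Real.cosh t ^ 2)) =
      ∫ θ in (0:ℝ)..(Real.pi / 2), 1 / Real.sqrt (1 - (1 - y ^ 2) * Real.sin θ ^ 2) := by
  set k := √(1 - y ^ 2)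
  have hk : k ^ 2 = 1 - y ^ 2 := sq_sqrt (by nlinarith)
  have hk0 : 0 < k := sqrt_pos.2 (by nlinarith)
  have hk1 : |k| < 1 := (sq_lt_one_iff_abs_lt_one k).1 (by nlinarith)
  have hcos : ∀ θ ∈ Ioo 0 (π / 2), 0 < cos θ := fun θ hθ =>
    cos_pos_of_mem_Ioo ⟨by linarith [hθ.1, pi_pos], hθ.2⟩
  have hsubst := intervalIntegral.integral_comp_mul_deriv_of_deriv_nonneg
    (a := 0) (b := π / 2) (g := fun t => 1 / √(1 - y ^ 2 * cosh t ^ 2))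
    (fun θ _ => (hasDerivAt_artanh_mul_sin hk1 θ).continuousAt.continuousWithinAt)
    (fun θ _ => hasDerivAt_artanh_mul_sin hk1 θ) fun θ hθ => by
      rw [min_eq_left (by positivity), max_eq_right (by positivity)] at hθ
      have hcosθ := hcos θ hθ
      have hD : 0 < 1 - k ^ 2 * sin θ ^ 2 := by nlinarith [sin_sq_le_one θ]
      positivity
  rw [sin_zero, mul_zero, artanh_zero, sin_pi_div_two, mul_one] at hsubst
  rw [arcosh_one_div_eq_artanh hy0 hy1.le, ← hsubst, intervalIntegral.integral_of_le (by positivity),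
    intervalIntegral.integral_of_le (by positivity), integral_Ioc_eq_integral_Ioo,
    integral_Ioc_eq_integral_Ioo]
  exact setIntegral_congr_fun measurableSet_Ioo fun θ hθ =>
    inv_sqrt_comp_artanh_mul_sin_mul_deriv hk0 hk (hcos θ hθ)
end

section
/- For real numbers x, y with 0 < x ≤ y < 1, one has ∫₀^{arcosh(1/y)} dt/√(1 − x² cosh² t) ≤ K(√(1 − x²)), with equality if and only if x = y. -/
section

open Real Set

theorem Real.tanh_arcosh_one_div {y : ℝ} (hy0 : 0 < y) (hy1 : y ≤ 1) :
    tanh (Real.arcosh (1 / y)) = √(1 - y ^ 2) := by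
  rw [tanh_arcosh (one_le_one_div hy0 hy1),
    show (1 / y) ^ 2 - 1 = (1 - y ^ 2) / y ^ 2 by field_simp,
    sqrt_div' _ (sq_nonneg y), sqrt_sq hy0.le, div_div, mul_one_div_cancel hy0.ne', div_one]

theorem Real.hasDerivAt_tanh (t : ℝ) : HasDerivAt tanh (1 / cosh t ^ 2) t := by
  have h := (hasDerivAt_sinh t).div (hasDerivAt_cosh t) (cosh_pos t).ne'
  rw [← sq, ← sq, cosh_sq_sub_sinh_sq] at h
  exact h.congr_of_eventuallyEq (.of_forall tanh_eq_sinh_div_cosh)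

theorem Real.continuous_tanh : Continuous tanh :=
  continuous_iff_continuousAt.2 fun t => (hasDerivAt_tanh t).continuousAt

noncomputable def ellipticKIntegrand (m θ : ℝ) : ℝ := 1 / √(1 - m * sin θ ^ 2)

variable {m x t : ℝ}

theorem sub_mul_sin_sq_pos (hm : m < 1) (θ : ℝ) : 0 < 1 - m * sin θ ^ 2 := by
  rcases le_total 0 m with h | h
  · nlinarith [sin_sq_le_one θ]
  · nlinarith [sq_nonneg (sin θ)]

theorem continuous_ellipticKIntegrand (hm : m < 1) : Continuous (ellipticKIntegrand m) :=
  continuous_const.div (by fun_prop) fun θ => (sqrt_pos.2 (sub_mul_sin_sq_pos hm θ)).ne'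

theorem one_le_ellipticKIntegrand (hm0 : 0 ≤ m) (hm1 : m < 1) (θ : ℝ) :
    1 ≤ ellipticKIntegrand m θ :=
  one_le_one_div (sqrt_pos.2 (sub_mul_sin_sq_pos hm1 θ))
    (sqrt_le_one.2 (by nlinarith [sq_nonneg (sin θ)]))

theorem sub_le_integral_ellipticKIntegrand (hm0 : 0 ≤ m) (hm1 : m < 1) {a b : ℝ}
    (hab : a ≤ b) :
    b - a ≤ ∫ θ in a..b, ellipticKIntegrand m θ := calc
  b - a = ∫ _ in a..b, (1 : ℝ) := by simp
  _ ≤ ∫ θ in a..b, ellipticKIntegrand m θ :=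
    intervalIntegral.integral_mono_on hab intervalIntegrable_const
      ((continuous_ellipticKIntegrand hm1).intervalIntegrable _ _)
      fun θ _ => one_le_ellipticKIntegrand hm0 hm1 θ

theorem tanh_div_sq_lt_one (h : x ^ 2 * cosh t ^ 2 < 1) :
    (tanh t / √(1 - x ^ 2)) ^ 2 < 1 := by
  have hx : 0 < 1 - x ^ 2 := by nlinarith [one_le_cosh t]
  rw [div_pow, sq_sqrt hx.le, div_lt_one hx, tanh_eq_sinh_div_cosh, div_pow,
    div_lt_iff₀ (by positivity)]
  nlinarith [cosh_sq_sub_sinh_sq t]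

theorem ellipticKIntegrand_arcsin_tanh_div (h : x ^ 2 * cosh t ^ 2 < 1) :
    ellipticKIntegrand (1 - x ^ 2) (arcsin (tanh t / √(1 - x ^ 2))) = cosh t := by
  have hu := abs_lt.1 ((sq_lt_one_iff_abs_lt_one _).1 (tanh_div_sq_lt_one h))
  have hx : 0 < 1 - x ^ 2 := by nlinarith [one_le_cosh t]
  have hsq : 1 - (1 - x ^ 2) * (tanh t / √(1 - x ^ 2)) ^ 2 = (1 / cosh t) ^ 2 := by
    rw [div_pow, sq_sqrt hx.le, mul_div_cancel₀ _ hx.ne', tanh_eq_sinh_div_cosh]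
    field_simp
    linear_combination cosh_sq_sub_sinh_sq t
  rw [ellipticKIntegrand, sin_arcsin hu.1.le hu.2.le, hsq, sqrt_sq (by positivity),
    one_div_one_div]

theorem hasDerivAt_arcsin_tanh_div (h : x ^ 2 * cosh t ^ 2 < 1) :
    HasDerivAt (fun t => arcsin (tanh t / √(1 - x ^ 2)))
      (1 / (cosh t * √(1 - x ^ 2 * cosh t ^ 2))) t := by
  have hu := abs_lt.1 ((sq_lt_one_iff_abs_lt_one _).1 (tanh_div_sq_lt_one h))
  have hx : 0 < 1 - x ^ 2 := by nlinarith [one_le_cosh t]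
  have hsq : 1 - (tanh t / √(1 - x ^ 2)) ^ 2 =
      (1 - x ^ 2 * cosh t ^ 2) / (√(1 - x ^ 2) * cosh t) ^ 2 := by
    rw [div_pow, mul_pow, sq_sqrt hx.le, tanh_eq_sinh_div_cosh]
    field_simp
    linear_combination cosh_sq_sub_sinh_sq t
  have hroot : √(1 - (tanh t / √(1 - x ^ 2)) ^ 2) =
      √(1 - x ^ 2 * cosh t ^ 2) / (√(1 - x ^ 2) * cosh t) := by
    rw [hsq, sqrt_div' _ (sq_nonneg _), sqrt_sq (by positivity)]
  have : 0 < √(1 - x ^ 2 * cosh t ^ 2) := sqrt_pos.2 (by linarith)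
  refine ((hasDerivAt_arcsin hu.1.ne' hu.2.ne).comp t
    ((hasDerivAt_tanh t).div_const _)).congr_deriv ?_
  rw [hroot]
  field_simp

theorem hasDerivAt_integral_ellipticKIntegrand_arcsin_tanh_div (hx : x ≠ 0)
    (h : x ^ 2 * cosh t ^ 2 < 1) :
    HasDerivAt (fun t => ∫ θ in (0 : ℝ)..arcsin (tanh t / √(1 - x ^ 2)),
      ellipticKIntegrand (1 - x ^ 2) θ) (1 / √(1 - x ^ 2 * cosh t ^ 2)) t := by
  have hx2 : 0 < x ^ 2 := by positivity
  have hg := continuous_ellipticKIntegrand (m := 1 - x ^ 2) (by linarith)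
  refine ((hg.integral_hasStrictDerivAt 0 _).hasDerivAt.comp t
    (hasDerivAt_arcsin_tanh_div h)).congr_deriv ?_
  rw [ellipticKIntegrand_arcsin_tanh_div h]
  field_simp [(cosh_pos t).ne']

theorem integral_arcosh_eq_integral_ellipticKIntegrand {y : ℝ} (hx : 0 < x) (hxy : x ≤ y)
    (hy : y < 1) :
    ∫ t in (0 : ℝ)..Real.arcosh (1 / y), 1 / √(1 - x ^ 2 * cosh t ^ 2) =
      ∫ θ in (0 : ℝ)..arcsin (√(1 - y ^ 2) / √(1 - x ^ 2)),
        ellipticKIntegrand (1 - x ^ 2) θ := by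
  have hy0 : 0 < y := hx.trans_le hxy
  have hy1 : 1 ≤ 1 / y := one_le_one_div hy0 hy.le
  set T := Real.arcosh (1 / y)
  have hT : 0 ≤ T := arcosh_nonneg hy1
  have hbound : ∀ t ∈ Ioo 0 T, x ^ 2 * cosh t ^ 2 < 1 := by
    intro t ht
    have hcosh : cosh t < 1 / y := cosh_arcosh hy1 ▸
      cosh_lt_cosh.2 (by rw [abs_of_pos ht.1, abs_of_nonneg hT]; exact ht.2)
    have : x * cosh t < 1 := calc
      x * cosh t < x * (1 / y) := mul_lt_mul_of_pos_left hcosh hx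
      _ ≤ 1 := by rw [mul_one_div]; exact div_le_one_of_le₀ hxy hy0.le
    rw [← mul_pow]
    exact pow_lt_one₀ (mul_pos hx (cosh_pos t)).le this two_ne_zero
  have hderiv := fun t ht =>
    hasDerivAt_integral_ellipticKIntegrand_arcsin_tanh_div hx.ne' (hbound t ht)
  have hg := continuous_ellipticKIntegrand (m := 1 - x ^ 2) (by nlinarith)
  have hcont : ContinuousOn (fun t => ∫ θ in (0 : ℝ)..arcsin (tanh t / √(1 - x ^ 2)),
      ellipticKIntegrand (1 - x ^ 2) θ) (Icc 0 T) :=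
    ((intervalIntegral.continuous_primitive (fun _ _ => hg.intervalIntegrable _ _) 0).comp
      (continuous_arcsin.comp (continuous_tanh.div_const _))).continuousOn
  -- For `x = y` the substitution has infinite slope at `T`, so FTC is applied on `Ioo 0 T` only.
  rw [intervalIntegral.integral_eq_sub_of_hasDerivAt_of_le hT hcont hderiv
    (intervalIntegral.intervalIntegrable_deriv_of_nonneg (by rwa [uIcc_of_le hT])
      (by rwa [min_eq_left hT, max_eq_right hT]) fun t _ => by positivity),
    tanh_arcosh_one_div hy0 hy.le]
  simp

end

theorem integral_le_completeEllipticK (x y : ℝ) (hx : 0 < x) (hxy : x ≤ y) (hy : y < 1) :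
    (∫ t in (0:ℝ)..arcosh (1 / y), 1 / Real.sqrt (1 - x ^ 2 * Real.cosh t ^ 2)) ≤
      (∫ θ in (0:ℝ)..(Real.pi / 2), 1 / Real.sqrt (1 - (1 - x ^ 2) * Real.sin θ ^ 2)) ∧
    ((∫ t in (0:ℝ)..arcosh (1 / y), 1 / Real.sqrt (1 - x ^ 2 * Real.cosh t ^ 2)) =
      (∫ θ in (0:ℝ)..(Real.pi / 2), 1 / Real.sqrt (1 - (1 - x ^ 2) * Real.sin θ ^ 2)) ↔ x = y) := by
  have hx1 : x ^ 2 < 1 := by nlinarith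
  have hm0 : 0 ≤ 1 - x ^ 2 := by linarith
  have hm1 : 1 - x ^ 2 < 1 := by nlinarith
  set a := Real.arcsin (Real.sqrt (1 - y ^ 2) / Real.sqrt (1 - x ^ 2))
  have hg := continuous_ellipticKIntegrand hm1
  have ha : a ≤ Real.pi / 2 := Real.arcsin_le_pi_div_two _
  have hI : (∫ t in (0:ℝ)..arcosh (1 / y), 1 / Real.sqrt (1 - x ^ 2 * Real.cosh t ^ 2)) =
      ∫ θ in (0:ℝ)..a, ellipticKIntegrand (1 - x ^ 2) θ :=
    integral_arcosh_eq_integral_ellipticKIntegrand hx hxy hy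
  have hsplit :
      (∫ θ in (0:ℝ)..(Real.pi / 2), 1 / Real.sqrt (1 - (1 - x ^ 2) * Real.sin θ ^ 2)) =
      (∫ θ in (0:ℝ)..a, ellipticKIntegrand (1 - x ^ 2) θ) +
        ∫ θ in a..(Real.pi / 2), ellipticKIntegrand (1 - x ^ 2) θ :=
    (intervalIntegral.integral_add_adjacent_intervals (hg.intervalIntegrable _ _)
      (hg.intervalIntegrable _ _)).symm
  have htail := sub_le_integral_ellipticKIntegrand hm0 hm1 ha
  have ha_eq : a = Real.pi / 2 ↔ x = y := by
    rw [Real.arcsin_eq_pi_div_two, one_le_div (Real.sqrt_pos.2 (by linarith)),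
      Real.sqrt_le_sqrt_iff (by nlinarith)]
    constructor
    · intro h; nlinarith
    · rintro rfl; rfl
  rw [hI, hsplit]
  refine ⟨by linarith, fun h => ha_eq.1 (by linarith), fun h => ?_⟩
  rw [ha_eq.2 h, intervalIntegral.integral_same, add_zero]
end

section
/- For every k with 0 < k < 1, the complete elliptic integral satisfies the strict inequality 4 K(k) < π/√(1 − k²) + π/√(1 − k²/2), i.e. ∫₀^{2π} dt/√(1 − k² sin² t) < π/√(1 − k²) + π/√(1 − k²/2). -/
open Real

set_option maxHeartbeats 1000000 in
theorem fourK_lt (k : ℝ) (h0 : 0 < k) (h1 : k < 1) :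
    (∫ t in (0:ℝ)..(2 * Real.pi), 1 / Real.sqrt (1 - k ^ 2 * Real.sin t ^ 2)) <
      Real.pi / Real.sqrt (1 - k ^ 2) + Real.pi / Real.sqrt (1 - k ^ 2 / 2) := by
  have hk2 : 0 < 1 - k ^ 2 := by nlinarith
  set c := Real.sqrt (1 - k ^ 2) with hc_def
  have hc : 0 < c := Real.sqrt_pos.mpr hk2
  have hcsq : c ^ 2 = 1 - k ^ 2 := Real.sq_sqrt hk2.le
  have hc1 : c < 1 := by nlinarith
  -- pointwise bound
  have key : ∀ t : ℝ, 1 / Real.sqrt (1 - k ^ 2 * Real.sin t ^ 2) ≤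
      Real.cos t ^ 2 + Real.sin t ^ 2 / c := by
    intro t
    set s := Real.sin t ^ 2 with hs_def
    have hs0 : 0 ≤ s := sq_nonneg _
    have hs1 : s ≤ 1 := by
      have := Real.sin_sq_le_one t; linarith
    have hX : 0 < 1 - k ^ 2 * s := by nlinarith
    have hsc : s ≤ s / c := by
      rw [le_div_iff₀ hc]; nlinarith
    have hL : 0 < (1 - s) + s / c := by linarith
    have hcos : Real.cos t ^ 2 = 1 - s := by
      have := Real.sin_sq_add_cos_sq t; linarith
    rw [hcos, div_le_iff₀ (Real.sqrt_pos.mpr hX)]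
    have hk2' : k ^ 2 = 1 - c ^ 2 := by linarith
    have key2 : c ^ 2 ≤ ((1 - s) * c + s) ^ 2 * (1 - k ^ 2 * s) := by
      rw [hk2']
      have hprod : 0 ≤ s * (1 - s) * (1 - c) ^ 2 * (c ^ 2 * (1 - s) + 2 * c + s) := by
        apply mul_nonneg
        · exact mul_nonneg (mul_nonneg hs0 (by linarith)) (sq_nonneg _)
        · nlinarith
      nlinarith [hprod]
    have h2 : ((1 - s) + s / c) ^ 2 * c ^ 2 = ((1 - s) * c + s) ^ 2 := by
      rw [← mul_pow]; congr 1; field_simp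
    have hsq : 1 ≤ ((1 - s) + s / c) ^ 2 * (1 - k ^ 2 * s) := by
      rw [← h2] at key2
      nlinarith [mul_pos hc hc, sq_nonneg c]
    calc (1:ℝ) = Real.sqrt 1 := Real.sqrt_one.symm
      _ ≤ Real.sqrt (((1 - s) + s / c) ^ 2 * (1 - k ^ 2 * s)) := Real.sqrt_le_sqrt hsq
      _ = ((1 - s) + s / c) * Real.sqrt (1 - k ^ 2 * s) := by
          rw [Real.sqrt_mul (sq_nonneg _), Real.sqrt_sq hL.le]
  -- integrability
  have hcont : Continuous fun t : ℝ => 1 / Real.sqrt (1 - k ^ 2 * Real.sin t ^ 2) := by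
    apply Continuous.div continuous_const
    · exact (Real.continuous_sqrt.comp (by continuity))
    · intro t
      have hX : 0 < 1 - k ^ 2 * Real.sin t ^ 2 := by
        nlinarith [Real.sin_sq_le_one t, sq_nonneg (Real.sin t)]
      exact (Real.sqrt_pos.mpr hX).ne'
  have hpi : 0 < Real.pi := Real.pi_pos
  have hmono : (∫ t in (0:ℝ)..(2 * Real.pi), 1 / Real.sqrt (1 - k ^ 2 * Real.sin t ^ 2)) ≤
      ∫ t in (0:ℝ)..(2 * Real.pi), (Real.cos t ^ 2 + Real.sin t ^ 2 / c) := by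
    apply intervalIntegral.integral_mono_on (by positivity) (hcont.intervalIntegrable _ _)
      ((by continuity : Continuous fun t : ℝ =>
        Real.cos t ^ 2 + Real.sin t ^ 2 / c).intervalIntegrable _ _)
    exact fun x _ => key x
  have hval : (∫ t in (0:ℝ)..(2 * Real.pi), (Real.cos t ^ 2 + Real.sin t ^ 2 / c))
      = Real.pi + Real.pi / c := by
    rw [intervalIntegral.integral_add
      ((by continuity : Continuous fun t : ℝ => Real.cos t ^ 2).intervalIntegrable _ _)
      ((by continuity : Continuous fun t : ℝ => Real.sin t ^ 2 / c).intervalIntegrable _ _)]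
    have h3 : (∫ t in (0:ℝ)..(2 * Real.pi), Real.sin t ^ 2 / c)
        = (∫ t in (0:ℝ)..(2 * Real.pi), Real.sin t ^ 2) / c := by
      simp [div_eq_mul_inv, intervalIntegral.integral_mul_const]
    rw [h3, integral_cos_sq, integral_sin_sq]
    rw [Real.sin_two_pi, Real.cos_two_pi]
    simp

  have hlast : Real.pi < Real.pi / Real.sqrt (1 - k ^ 2 / 2) := by
    have h4 : 0 < 1 - k ^ 2 / 2 := by nlinarith
    have h5 : Real.sqrt (1 - k ^ 2 / 2) < 1 := by
      have := Real.sqrt_lt_sqrt h4.le (by nlinarith : 1 - k ^ 2 / 2 < 1)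
      rwa [Real.sqrt_one] at this
    rw [lt_div_iff₀ (Real.sqrt_pos.mpr h4)]
    nlinarith
  calc (∫ t in (0:ℝ)..(2 * Real.pi), 1 / Real.sqrt (1 - k ^ 2 * Real.sin t ^ 2))
      ≤ Real.pi + Real.pi / c := hmono.trans_eq hval
    _ < Real.pi / c + Real.pi / Real.sqrt (1 - k ^ 2 / 2) := by linarith
end

section
/- Let 0 < k < 1 and ρ_k = arcosh(1/k). Then the entire function h_k(z) = 1 − k² sin² z does not vanish on the open horizontal strip { z ∈ ℂ : |Im z| < ρ_k }. -/
lemma cosh_arcosh (t : ℝ) (ht : 1 ≤ t) : Real.cosh (arcosh t) = t := by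
  have h0 : (0:ℝ) ≤ t ^ 2 - 1 := by nlinarith
  set s := Real.sqrt (t ^ 2 - 1) with hs
  have hs0 : 0 ≤ s := Real.sqrt_nonneg _
  have hs2 : s ^ 2 = t ^ 2 - 1 := Real.sq_sqrt h0
  have ha : 0 < t + s := by linarith
  unfold arcosh
  rw [Real.cosh_eq, Real.exp_log ha, Real.exp_neg, Real.exp_log ha]
  have hinv : (t + s)⁻¹ = t - s := by
    rw [inv_eq_iff_eq_inv, eq_comm, inv_eq_iff_eq_inv]
    · field_simp
      nlinarith
  rw [hinv]; ring

lemma arcosh_nonneg (t : ℝ) (ht : 1 ≤ t) : 0 ≤ arcosh t := by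
  unfold arcosh
  apply Real.log_nonneg
  have := Real.sqrt_nonneg (t ^ 2 - 1)
  linarith

theorem hk_ne_zero_on_strip (k : ℝ) (h0 : 0 < k) (h1 : k < 1) (z : ℂ)
    (hz : |z.im| < arcosh (1 / k)) :
    1 - (k : ℂ) ^ 2 * Complex.sin z ^ 2 ≠ 0 := by
  intro h
  have hk1 : (1:ℝ) ≤ 1 / k := by
    rw [le_div_iff₀ h0]; linarith
  have hcosh : Real.cosh z.im < 1 / k := by
    calc Real.cosh z.im = Real.cosh |z.im| := (Real.cosh_abs z.im).symm
    _ < Real.cosh (arcosh (1 / k)) := by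
        apply Real.cosh_lt_cosh.mpr
        rwa [abs_abs, abs_of_nonneg (arcosh_nonneg _ hk1)]
    _ = 1 / k := cosh_arcosh _ hk1
  -- (k sin z)^2 = 1
  have hfac : ((k:ℂ) * Complex.sin z - 1) * ((k:ℂ) * Complex.sin z + 1) = 0 := by
    linear_combination -h
  have hre : |((k:ℂ) * Complex.sin z).re| = 1 := by
    rcases mul_eq_zero.mp hfac with hc | hc
    · have h1' : (k:ℂ) * Complex.sin z = 1 := sub_eq_zero.mp hc
      rw [h1']; simp
    · have h1' : (k:ℂ) * Complex.sin z = -1 := eq_neg_of_add_eq_zero_left hc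
      rw [h1']; simp
  have hsre : (Complex.sin z).re = Real.sin z.re * Real.cosh z.im := by
    rw [Complex.sin_eq]
    simp [Complex.sin_ofReal_re]
  have hre2 : ((k:ℂ) * Complex.sin z).re = k * (Real.sin z.re * Real.cosh z.im) := by
    rw [Complex.re_ofReal_mul, hsre]
  have hb : |((k:ℂ) * Complex.sin z).re| < 1 := by
    rw [hre2, abs_mul, abs_mul, abs_of_pos h0, abs_of_pos (Real.cosh_pos z.im)]
    calc k * (|Real.sin z.re| * Real.cosh z.im) ≤ k * (1 * Real.cosh z.im) := by
          apply mul_le_mul_of_nonneg_left _ h0.le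
          exact mul_le_mul_of_nonneg_right (Real.abs_sin_le_one _) (Real.cosh_pos z.im).le
      _ = k * Real.cosh z.im := by ring
      _ < k * (1 / k) := by exact mul_lt_mul_of_pos_left hcosh h0
      _ = 1 := by field_simp
  rw [hre] at hb
  exact lt_irrefl _ hb
end
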